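/- arXiv:2209.06826 — 8 statements merged into one kernel-verified Lean document; each statement's English description precedes it below -/
import Mathlib

section
/- For every interval I = [I1, I2] of positive integers (1 ≤ I1 ≤ I2), I can be partitioned into a finite number of disjoint and consecutive intervals J^(-c), J^(-c+1), ..., J^(0), J^(1), ..., J^(d) with c, d ≥ 0, such that each J^(i) belongs to the family 𝒥 of geometric covering intervals, the intervals are consecutive (the minimum of J^(i+1) equals the maximum of J^(i) plus 1), their union is I, and moreover |J^(i-1)|/|J^(i)| ≤ 1/2 for i = -c+1, ..., 0 and |J^(i+1)|/|J^(i)| ≤ 1/2 for i = 1, ..., d-1, where |J| denotes the number of elements of J. -/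
/-- `p = (a, b)` represents a geometric covering interval `[a, b] = [i·2^n, (i+1)·2^n − 1]`
for some `n ≥ 0` and `i ≥ 1`; the family of all such intervals is `𝒥 = ⋃_n 𝒥_n`. -/
def IsGCI (p : ℕ × ℕ) : Prop :=
  ∃ n i : ℕ, 1 ≤ i ∧ p.1 = i * 2 ^ n ∧ p.2 = (i + 1) * 2 ^ n - 1

lemma leftPhase (b : ℕ) : ∀ r a n : ℕ, b - a = r → 1 ≤ a → a ≤ b → 2 ^ n ∣ a →
    ∃ (c : ℕ) (f g : ℕ → ℕ), f 0 = a ∧ n ≤ g 0 ∧ f c ≤ b ∧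
      b + 1 - f c ≤ 2 ^ g c ∧ (∀ k ≤ c, 2 ^ g k ∣ f k ∧ 1 ≤ f k) ∧
      (∀ k < c, f (k + 1) = f k + 2 ^ g k) ∧
      (∀ k, k + 1 ≤ c → g k < g (k + 1)) := by
  intro r
  induction r using Nat.strong_induction_on with
  | _ r IH =>
    intro a n hr ha hab hdvd
    obtain ⟨m, u, hu, hau⟩ := Nat.exists_eq_two_pow_mul_odd (by omega : a ≠ 0)
    have hm1 : 1 ≤ 2 ^ m := Nat.one_le_two_pow
    have hnm : n ≤ m := by
      by_contra hc
      push_neg at hc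
      have h1 : 2 ^ m * 2 ∣ 2 ^ m * u := by
        rw [← pow_succ]
        exact dvd_trans (pow_dvd_pow 2 (by omega)) (hau ▸ hdvd)
      have h2 : 2 ∣ u := (mul_dvd_mul_iff_left (by positivity : (2:ℕ)^m ≠ 0)).1 h1
      have := Nat.odd_iff.1 hu
      omega
    have hdm : 2 ^ m ∣ a := hau ▸ Dvd.intro u rfl
    by_cases hcase : b + 1 - a ≤ 2 ^ m
    · exact ⟨0, fun _ => a, fun _ => m, rfl, hnm, hab, hcase,
        fun k _ => ⟨hdm, ha⟩, by omega, by omega⟩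
    · have hu1 : 1 ≤ u := by
        rcases Nat.eq_zero_or_pos u with h | h
        · rw [h, Nat.mul_zero] at hau; omega
        · exact h
      have hab' : a + 2 ^ m ≤ b := by omega
      have hdvd' : 2 ^ (m + 1) ∣ a + 2 ^ m := by
        have : a + 2 ^ m = 2 ^ m * (u + 1) := by rw [hau, Nat.mul_add, Nat.mul_one]
        rw [this, pow_succ]
        exact Nat.mul_dvd_mul_left _ (by
          have := Nat.odd_iff.1 hu
          omega)
      obtain ⟨c', f', g', hf0, hg0, hfc, hterm, hdk, hstep, hmono⟩ :=
        IH (b - (a + 2 ^ m)) (by omega) (a + 2 ^ m) (m + 1) rfl (by omega) hab' hdvd'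
      refine ⟨c' + 1, fun k => Nat.casesOn k a f', fun k => Nat.casesOn k m g',
        rfl, hnm, hfc, hterm, ?_, ?_, ?_⟩
      · intro k hk
        rcases k with _ | k
        · exact ⟨hdm, ha⟩
        · exact hdk k (by omega)
      · intro k hk
        rcases k with _ | k
        · show f' 0 = a + 2 ^ m; exact hf0
        · exact hstep k (by omega)
      · intro k hk
        rcases k with _ | k
        · show m < g' 0; omega
        · exact hmono k (by omega)

/-- Right phase: binary decomposition into at-most-halving dyadic intervals. -/
lemma rightPhase : ∀ L : ℕ, ∀ a : ℕ, 1 ≤ L → 1 ≤ a → (∀ m : ℕ, 2 ^ m ≤ L → 2 ^ m ∣ a) →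
    ∃ (d : ℕ) (e : ℕ → ℕ), e 0 = a ∧ e (d + 1) = a + L ∧ e 1 ≤ a + L ∧
      (∀ k ≤ d, ∃ n i : ℕ, 1 ≤ i ∧ e k = i * 2 ^ n ∧ e (k + 1) = (i + 1) * 2 ^ n) ∧
      (∀ k, k + 1 ≤ d → 2 * (e (k + 2) - e (k + 1)) ≤ e (k + 1) - e k) := by
  intro L
  induction L using Nat.strong_induction_on with
  | _ L IH =>
    intro a hL ha hdvd
    set m := Nat.log 2 L with hm
    have hpow : 2 ^ m ≤ L := Nat.pow_log_le_self 2 (by omega)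
    have hlt : L < 2 ^ (m + 1) := Nat.lt_pow_succ_log_self (by norm_num) L
    have hma : 2 ^ m ∣ a := hdvd m hpow
    obtain ⟨i, hi⟩ := hma
    have hi1 : 1 ≤ i := by
      rcases Nat.eq_zero_or_pos i with h | h
      · rw [h, Nat.mul_zero] at hi; omega
      · exact h
    have hgci0 : ∀ b : ℕ, a = 2 ^ m * b → a + 2 ^ m = (b + 1) * 2 ^ m := by
      intro b hb; rw [hb, Nat.add_mul, Nat.one_mul, Nat.mul_comm]
    by_cases hcase : L = 2 ^ m
    · refine ⟨0, fun k => Nat.casesOn k a (fun _ => a + L), rfl, rfl, le_refl _, ?_, by omega⟩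
      intro k hk
      interval_cases k
      exact ⟨m, i, hi1, by show a = i * 2 ^ m; rw [hi, Nat.mul_comm], by
        show a + L = _
        rw [hcase]; exact hgci0 i hi⟩
    · have hL' : 1 ≤ L - 2 ^ m := by omega
      have hlt' : L - 2 ^ m < 2 ^ m := by omega
      have hLlt : L - 2 ^ m < L := by omega
      have hdvd' : ∀ k : ℕ, 2 ^ k ≤ L - 2 ^ m → 2 ^ k ∣ a + 2 ^ m := by
        intro k hk
        have hklt : 2 ^ k < 2 ^ m := lt_of_le_of_lt hk hlt'
        have hkm : k < m := (Nat.pow_lt_pow_iff_right (by norm_num)).1 hklt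
        exact Nat.dvd_add (hdvd k (by omega)) (pow_dvd_pow 2 (le_of_lt hkm))
      obtain ⟨d', e', he0, heD, he1, hgci, hhalf⟩ :=
        IH (L - 2 ^ m) hLlt (a + 2 ^ m) hL' (by omega) hdvd'
      refine ⟨d' + 1, fun k => Nat.casesOn k a e', rfl, ?_, ?_, ?_, ?_⟩
      · show e' (d' + 1) = a + L
        rw [heD]; omega
      · show e' 0 ≤ a + L
        rw [he0]; omega
      · intro k hk
        rcases k with _ | k
        · exact ⟨m, i, hi1, by show a = i * 2 ^ m; rw [hi, Nat.mul_comm], by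
            show e' 0 = _
            rw [he0]; exact hgci0 i hi⟩
        · obtain ⟨n, j, hj, h1, h2⟩ := hgci k (by omega)
          exact ⟨n, j, hj, h1, h2⟩
      · intro k hk
        rcases k with _ | k
        · -- 2 * (e' 1 - e' 0) ≤ e' 0 - a
          show 2 * (e' 1 - e' 0) ≤ e' 0 - a
          obtain ⟨n, j, hj, h1, h2⟩ := hgci 0 (by omega)
          have h2' : e' 1 = (j + 1) * 2 ^ n := h2
          have hlen : e' 1 - e' 0 = 2 ^ n := by
            rw [h2', h1, Nat.add_mul, Nat.one_mul, Nat.add_sub_cancel_left]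
          have hle : 2 ^ n ≤ L - 2 ^ m := by rw [← hlen]; omega
          have hnm : n < m := (Nat.pow_lt_pow_iff_right (by norm_num)).1 (lt_of_le_of_lt hle hlt')
          have h2n : 2 * 2 ^ n ≤ 2 ^ m := by
            calc 2 * 2 ^ n = 2 ^ (n + 1) := by ring
            _ ≤ 2 ^ m := Nat.pow_le_pow_right (by norm_num) (by omega)
          omega
        · exact hhalf k (by omega)

lemma combined (a b : ℕ) (ha : 1 ≤ a) (hab : a ≤ b) :
    ∃ (mc md : ℕ) (e : ℕ → ℕ), e 0 = a ∧ e (mc + md + 1) = b + 1 ∧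
      (∀ k ≤ mc + md, ∃ n i : ℕ, 1 ≤ i ∧ e k = i * 2 ^ n ∧ e (k + 1) = (i + 1) * 2 ^ n) ∧
      (∀ k, k + 1 ≤ mc → 2 * (e (k + 1) - e k) ≤ e (k + 2) - e (k + 1)) ∧
      (∀ k, mc + 1 ≤ k → k + 1 ≤ mc + md → 2 * (e (k + 2) - e (k + 1)) ≤ e (k + 1) - e k) := by
  obtain ⟨c, f, g, hf0, -, hfc, hterm, hdk, hstep, hmono⟩ :=
    leftPhase b (b - a) a 0 rfl ha hab (one_dvd a)
  have hfc1 : 1 ≤ f c := (hdk c le_rfl).2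
  have hL : 1 ≤ b + 1 - f c := by omega
  have hdvdR : ∀ m : ℕ, 2 ^ m ≤ b + 1 - f c → 2 ^ m ∣ f c := by
    intro m hm
    have h1 : 2 ^ m ≤ 2 ^ g c := le_trans hm hterm
    have h2 : m ≤ g c := (Nat.pow_le_pow_iff_right (by norm_num)).1 h1
    exact dvd_trans (pow_dvd_pow 2 h2) (hdk c le_rfl).1
  obtain ⟨dR, eR, heR0, heRD, heR1, hgciR, hhalfR⟩ :=
    rightPhase (b + 1 - f c) (f c) hL hfc1 hdvdR
  set e : ℕ → ℕ := fun k => if k < c then f k else eR (k - c) with he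
  have hef : ∀ k ≤ c, e k = f k := by
    intro k hk
    rcases lt_or_eq_of_le hk with h | h
    · simp [he, h]
    · subst h; simp [he, heR0]
  have heg : ∀ j, e (c + j) = eR j := by
    intro j
    have hnc : ¬ c + j < c := by omega
    simp [he, hnc, Nat.add_sub_cancel_left]
  refine ⟨c - 1, (c + dR) - (c - 1), e, ?_, ?_, ?_, ?_, ?_⟩
  · rw [hef 0 (by omega), hf0]
  · have hsum : c - 1 + (c + dR - (c - 1)) + 1 = c + (dR + 1) := by omega
    rw [hsum, heg, heRD]; omega
  · intro k hk
    have hk' : k ≤ c + dR := by omega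
    by_cases hkc : k < c
    · obtain ⟨hd, h1⟩ := hdk k (by omega)
      obtain ⟨i, hi⟩ := hd
      have hi1 : 1 ≤ i := by
        rcases Nat.eq_zero_or_pos i with h | h
        · rw [h, Nat.mul_zero] at hi; omega
        · exact h
      refine ⟨g k, i, hi1, by rw [hef k (by omega), hi, Nat.mul_comm], ?_⟩
      rw [hef (k + 1) (by omega), hstep k hkc, hi, Nat.add_mul, Nat.one_mul, Nat.mul_comm]
    · have hkd : k - c ≤ dR := by omega
      obtain ⟨n, i, hi1, h1, h2⟩ := hgciR (k - c) hkd
      refine ⟨n, i, hi1, ?_, ?_⟩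
      · have := heg (k - c); rw [show c + (k - c) = k by omega] at this; rw [this, h1]
      · have := heg (k - c + 1); rw [show c + (k - c + 1) = k + 1 by omega] at this
        rw [this, h2]
  · intro k hk
    have h2c : k + 2 ≤ c := by omega
    have hg : g k + 1 ≤ g (k + 1) := hmono k (by omega)
    have key : 2 * 2 ^ g k ≤ 2 ^ g (k + 1) := by
      calc 2 * 2 ^ g k = 2 ^ (g k + 1) := by ring
      _ ≤ 2 ^ g (k + 1) := Nat.pow_le_pow_right (by norm_num) hg
    have e1 : e (k + 1) - e k = 2 ^ g k := by
      rw [hef (k + 1) (by omega), hef k (by omega), hstep k (by omega),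
        Nat.add_sub_cancel_left]
    have e2 : e (k + 2) - e (k + 1) = 2 ^ g (k + 1) := by
      rw [hef (k + 2) (by omega), hef (k + 1) (by omega), hstep (k + 1) (by omega),
        Nat.add_sub_cancel_left]
    rw [e1, e2]
    exact key
  · intro k hk1 hk2
    have hkc : c ≤ k := by omega
    have hj : k - c + 1 ≤ dR := by omega
    have h0 := heg (k - c); rw [show c + (k - c) = k by omega] at h0
    have h1 := heg (k - c + 1); rw [show c + (k - c + 1) = k + 1 by omega] at h1
    have h2 := heg (k - c + 2); rw [show c + (k - c + 2) = k + 2 by omega] at h2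
    rw [h0, h1, h2]
    exact hhalfR (k - c) hj
/-- Every interval `I = [I1, I2]` of positive integers can be partitioned into finitely many
disjoint and consecutive geometric covering intervals `J (−c), …, J 0, J 1, …, J d` with
`c, d ≥ 0`, whose lengths satisfy `|J (i−1)| / |J i| ≤ 1/2` for `i = −c+1, …, 0` and
`|J (i+1)| / |J i| ≤ 1/2` for `i = 1, …, d−1`. -/
theorem partition_into_geometric_covering_intervals
    (I1 I2 : ℕ) (h1 : 1 ≤ I1) (h12 : I1 ≤ I2) :
    ∃ (c d : ℕ) (J : ℤ → ℕ × ℕ),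
      -- each piece is a geometric covering interval
      (∀ i ∈ Finset.Icc (-(c : ℤ)) (d : ℤ), IsGCI (J i)) ∧
      -- the pieces are consecutive: the minimum of `J (i+1)` is the maximum of `J i` plus 1
      (∀ i : ℤ, -(c : ℤ) ≤ i → i < (d : ℤ) → (J (i + 1)).1 = (J i).2 + 1) ∧
      -- the pieces are pairwise disjoint
      (∀ i ∈ Finset.Icc (-(c : ℤ)) (d : ℤ), ∀ j ∈ Finset.Icc (-(c : ℤ)) (d : ℤ), i ≠ j →
        Disjoint (Finset.Icc (J i).1 (J i).2) (Finset.Icc (J j).1 (J j).2)) ∧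
      -- their union is `I`
      (Finset.Icc I1 I2 =
        (Finset.Icc (-(c : ℤ)) (d : ℤ)).biUnion fun i => Finset.Icc (J i).1 (J i).2) ∧
      -- lengths successively at least double up to index 0
      (∀ i : ℤ, -(c : ℤ) + 1 ≤ i → i ≤ 0 →
        2 * (Finset.Icc (J (i - 1)).1 (J (i - 1)).2).card ≤
          (Finset.Icc (J i).1 (J i).2).card) ∧
      -- lengths successively at most halve from index 1 on
      (∀ i : ℤ, 1 ≤ i → i ≤ (d : ℤ) - 1 →
        2 * (Finset.Icc (J (i + 1)).1 (J (i + 1)).2).card ≤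
          (Finset.Icc (J i).1 (J i).2).card) := by
  obtain ⟨mc, md, e, he0, heEnd, hgci, hdbl, hhalf⟩ := combined I1 I2 h1 h12
  set N := mc + md with hN
  -- basic monotonicity facts
  have hstep : ∀ k ≤ N, e k < e (k + 1) := by
    intro k hk
    obtain ⟨n, i, hi1, h1, h2⟩ := hgci k hk
    rw [h1, h2]
    exact (Nat.mul_lt_mul_right (Nat.two_pow_pos n)).mpr (by omega)
  have hmono : ∀ k l, k ≤ l → l ≤ N + 1 → e k ≤ e l := by
    intro k l hkl hl
    induction l with
    | zero =>
      have : k = 0 := by omega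
      rw [this]
    | succ l IH =>
      rcases Nat.eq_or_lt_of_le hkl with h | h
      · rw [h]
      · exact le_trans (IH (by omega) (by omega)) (le_of_lt (hstep l (by omega)))
  have hpos : ∀ k, k ≤ N + 1 → 1 ≤ e k := by
    intro k hk
    have := hmono 0 k (by omega) hk
    omega
  have hcard : ∀ k, k ≤ N → (Finset.Icc (e k) (e (k + 1) - 1)).card = e (k + 1) - e k := by
    intro k hk
    rw [Nat.card_Icc]
    have := hpos (k + 1) (by omega)
    omega
  refine ⟨mc, md, fun i => (e ((i + mc).toNat), e ((i + mc).toNat + 1) - 1), ?_, ?_, ?_, ?_, ?_, ?_⟩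
  · -- GCI
    intro i hi
    rw [Finset.mem_Icc] at hi
    set k := ((i : ℤ) + mc).toNat with hkdef
    have hkN : k ≤ N := by omega
    obtain ⟨n, j, hj1, h1, h2⟩ := hgci k hkN
    exact ⟨n, j, hj1, h1, by dsimp only; rw [h2]⟩
  · -- consecutive
    intro i hil hir
    dsimp only
    have hk1 : ((i + 1) + (mc : ℤ)).toNat = (i + mc).toNat + 1 := by omega
    rw [hk1]
    have := hpos ((i + mc).toNat + 1) (by omega)
    omega
  · -- disjoint
    have key : ∀ i j : ℤ, -(mc : ℤ) ≤ i → j ≤ (md : ℤ) → i < j →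
        Disjoint (Finset.Icc (e ((i + mc).toNat)) (e ((i + mc).toNat + 1) - 1))
          (Finset.Icc (e ((j + mc).toNat)) (e ((j + mc).toNat + 1) - 1)) := by
      intro i j hi hj hij
      rw [Finset.disjoint_left]
      intro x hx hx'
      rw [Finset.mem_Icc] at hx hx'
      have h1 : (i + mc).toNat + 1 ≤ (j + mc).toNat := by omega
      have h2 : e ((i + mc).toNat + 1) ≤ e ((j + mc).toNat) := by
        apply hmono _ _ h1
        omega
      have h3 := hpos ((i + mc).toNat + 1) (by omega)
      omega
    intro i hi j hj hij
    rw [Finset.mem_Icc] at hi hj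
    dsimp only
    rcases lt_or_gt_of_ne hij with h | h
    · exact key i j hi.1 hj.2 h
    · exact (key j i hj.1 hi.2 h).symm
  · -- union
    have hU : ∀ M, M ≤ N + 1 → Finset.Icc (e 0) (e M - 1) =
        (Finset.range M).biUnion (fun k => Finset.Icc (e k) (e (k + 1) - 1)) := by
      intro M
      induction M with
      | zero =>
        intro _
        rw [Finset.range_zero, Finset.biUnion_empty]
        apply Finset.Icc_eq_empty
        have := hpos 0 (by omega)
        omega
      | succ M IH =>
        intro hM
        rw [Finset.range_add_one, Finset.biUnion_insert, ← IH (by omega)]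
        have hm1 : e 0 ≤ e M := hmono 0 M (by omega) (by omega)
        have hm2 : e M < e (M + 1) := hstep M (by omega)
        have hp0 := hpos 0 (by omega)
        ext x
        simp only [Finset.mem_Icc, Finset.mem_union]
        omega
    have hIcc : Finset.Icc I1 I2 = Finset.Icc (e 0) (e (N + 1) - 1) := by
      rw [he0, heEnd, Nat.add_sub_cancel]
    rw [hIcc, hU (N + 1) le_rfl]
    ext x
    simp only [Finset.mem_biUnion, Finset.mem_Icc, Finset.mem_range]
    constructor
    · rintro ⟨k, hk, hx⟩
      refine ⟨(k : ℤ) - mc, ⟨by omega, by omega⟩, ?_⟩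
      have : ((k : ℤ) - mc + mc).toNat = k := by omega
      rw [this]
      exact hx
    · rintro ⟨i, ⟨hi1, hi2⟩, hx⟩
      exact ⟨(i + mc).toNat, by omega, hx⟩
  · -- doubling
    intro i hi1 hi0
    dsimp only
    set k := ((i : ℤ) + mc).toNat with hkdef
    have hprev : ((i - 1) + (mc : ℤ)).toNat = k - 1 := by omega
    rw [hprev, hcard (k - 1) (by omega), hcard k (by omega)]
    have h := hdbl (k - 1) (by omega)
    have e1 : k - 1 + 1 = k := by omega
    have e2 : k - 1 + 2 = k + 1 := by omega
    rw [e1, e2] at h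
    rw [e1]
    exact h
  · -- halving
    intro i hi1 hid
    dsimp only
    set k := ((i : ℤ) + mc).toNat with hkdef
    have hnext : ((i + 1) + (mc : ℤ)).toNat = k + 1 := by omega
    rw [hnext, hcard (k + 1) (by omega), hcard k (by omega)]
    have h := hhalf k (by omega) (by omega)
    have e1 : k + 1 + 1 = k + 2 := rfl
    rw [e1]
    exact h
end

section
/- (Donsker–Varadhan) Let Θ be a finite set, let P and Q be probability mass functions on Θ with P(θ) > 0 for all θ, and let φ : Θ → ℝ be any function. Then E_Q[φ(θ)] − ln E_P[e^{φ(θ)}] ≤ KL(Q‖P), where E_Q[φ] = Σ_θ Q(θ)φ(θ), E_P[e^φ] = Σ_θ P(θ)e^{φ(θ)}, and KL(Q‖P) = Σ_θ Q(θ) ln(Q(θ)/P(θ)) is the Kullback–Leibler divergence (with the convention 0·ln 0 = 0). -/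
/-- **Donsker–Varadhan.** For a finite set `Θ`, probability mass functions `P, Q` on `Θ`
with `P` of full support, and any function `φ : Θ → ℝ`,
`E_Q[φ] − ln E_P[e^φ] ≤ KL(Q‖P)`, where `KL(Q‖P) = Σ θ, Q θ * ln (Q θ / P θ)`
(with the convention `0 · ln 0 = 0`, automatic in Lean since `Real.log 0 = 0`). -/
theorem donsker_varadhan {Θ : Type*} [Fintype Θ]
    (P Q : Θ → ℝ) (φ : Θ → ℝ)
    (hP : ∀ θ, 0 < P θ) (hPsum : ∑ θ, P θ = 1)
    (hQ : ∀ θ, 0 ≤ Q θ) (hQsum : ∑ θ, Q θ = 1) :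
    (∑ θ, Q θ * φ θ) - Real.log (∑ θ, P θ * Real.exp (φ θ)) ≤
      ∑ θ, Q θ * Real.log (Q θ / P θ) := by
  have hne : Nonempty Θ := by
    by_contra h
    rw [not_nonempty_iff] at h
    simp [Finset.sum_empty] at hQsum
  set Z : ℝ := ∑ θ, P θ * Real.exp (φ θ) with hZdef
  have hZ : 0 < Z := by
    apply Finset.sum_pos
    · intro θ _; exact mul_pos (hP θ) (Real.exp_pos _)
    · exact Finset.univ_nonempty
  have key : ∀ θ : Θ, Q θ * φ θ - Q θ * Real.log (Q θ / P θ) - Q θ * Real.log Z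
      ≤ P θ * Real.exp (φ θ) / Z - Q θ := by
    intro θ
    rcases eq_or_lt_of_le (hQ θ) with h0 | h0
    · rw [← h0]
      simp only [zero_mul, sub_zero, sub_zero, zero_sub, neg_nonpos] at *
      exact div_nonneg (mul_nonneg (hP θ).le (Real.exp_pos _).le) hZ.le
    · set x : ℝ := P θ * Real.exp (φ θ) / (Q θ * Z) with hxdef
      have hx : 0 < x := div_pos (mul_pos (hP θ) (Real.exp_pos _)) (mul_pos h0 hZ)
      have hlog : Real.log x ≤ x - 1 := Real.log_le_sub_one_of_pos hx
      have hxeq : Real.log x = Real.log (P θ) + φ θ - Real.log (Q θ) - Real.log Z := by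
        rw [hxdef, Real.log_div (ne_of_gt (mul_pos (hP θ) (Real.exp_pos _))) (ne_of_gt (mul_pos h0 hZ)),
          Real.log_mul (ne_of_gt (hP θ)) (Real.exp_ne_zero _),
          Real.log_mul (ne_of_gt h0) (ne_of_gt hZ), Real.log_exp]
        ring
      have hqx : Q θ * x = P θ * Real.exp (φ θ) / Z := by
        field_simp [hxdef]
        rw [hxdef]; field_simp [ne_of_gt h0, ne_of_gt hZ]
      have hlogQP : Real.log (Q θ / P θ) = Real.log (Q θ) - Real.log (P θ) :=
        Real.log_div (ne_of_gt h0) (ne_of_gt (hP θ))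
      have := mul_le_mul_of_nonneg_left hlog (le_of_lt h0)
      rw [mul_sub, mul_one, hqx, hxeq] at this
      rw [hlogQP]
      nlinarith
  have hsum : ∑ θ, (Q θ * φ θ - Q θ * Real.log (Q θ / P θ) - Q θ * Real.log Z)
      ≤ ∑ θ, (P θ * Real.exp (φ θ) / Z - Q θ) :=
    Finset.sum_le_sum (fun θ _ => key θ)
  have h1 : ∑ θ, (P θ * Real.exp (φ θ) / Z - Q θ) = 0 := by
    rw [Finset.sum_sub_distrib, ← Finset.sum_div, ← hZdef, hQsum, div_self (ne_of_gt hZ)]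
    ring
  have h2 : ∑ θ, (Q θ * φ θ - Q θ * Real.log (Q θ / P θ) - Q θ * Real.log Z)
      = (∑ θ, Q θ * φ θ) - (∑ θ, Q θ * Real.log (Q θ / P θ)) - Real.log Z := by
    rw [Finset.sum_sub_distrib, Finset.sum_sub_distrib, ← Finset.sum_mul, hQsum, one_mul]
  rw [h1, h2] at hsum
  linarith
end

section
/- Let Θ be a finite set, ρ a probability mass function on Θ with ρ(θ) > 0 for all θ, and g_t : Θ → ℝ arbitrary loss functions for t = 1, ..., T. Define probability mass functions P_t on Θ by the Exponential Weights algorithm with η_EW = 1, i.e., P_1 = ρ and P_{t+1}(θ) = e^{−Σ_{s=1}^t g_s(θ)} ρ(θ) / Z_{t+1} with Z_{t+1} = Σ_{θ'} e^{−Σ_{s=1}^t g_s(θ')} ρ(θ'). Then for every probability mass function Q on Θ, the surrogate regret S_T^Q = −Σ_{t=1}^T ln E_{P_t}[e^{−g_t(θ)}] − E_Q[Σ_{t=1}^T g_t(θ)] satisfies S_T^Q ≤ KL(Q‖ρ), where KL(Q‖ρ) = Σ_θ Q(θ) ln(Q(θ)/ρ(θ)) (with 0·ln 0 = 0). -/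
/-- The surrogate regret of the Exponential Weights algorithm (with `η_EW = 1`, prior `ρ`
of full support on a finite set `Θ`, and arbitrary real-valued losses `g t`) compared to
any probability mass function `Q` is bounded by the Kullback–Leibler divergence `KL(Q‖ρ)`.
Here `P t θ = e^{−Σ_{s=1}^{t−1} g s θ} ρ θ / Z_t` (so `P 1 = ρ`), the surrogate regret is
`−Σ_{t=1}^T ln E_{P t}[e^{−g t}] − E_Q[Σ_{t=1}^T g t]`, and
`KL(Q‖ρ) = Σ θ, Q θ * ln (Q θ / ρ θ)` (with `0 · ln 0 = 0`). -/
theorem exponential_weights_surrogate_regret_le_KL {Θ : Type*} [Fintype Θ]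
    (ρ : Θ → ℝ) (hρ : ∀ θ, 0 < ρ θ) (hρ1 : ∑ θ, ρ θ = 1)
    (T : ℕ) (g : ℕ → Θ → ℝ) (P : ℕ → Θ → ℝ)
    (hP : ∀ t θ, P t θ = Real.exp (-∑ s ∈ Finset.Ico 1 t, g s θ) * ρ θ /
      ∑ θ', Real.exp (-∑ s ∈ Finset.Ico 1 t, g s θ') * ρ θ')
    (Q : Θ → ℝ) (hQ : ∀ θ, 0 ≤ Q θ) (hQ1 : ∑ θ, Q θ = 1) :
    (-∑ t ∈ Finset.Icc 1 T, Real.log (∑ θ, P t θ * Real.exp (-g t θ))) -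
      (∑ θ, Q θ * ∑ t ∈ Finset.Icc 1 T, g t θ) ≤
      ∑ θ, Q θ * Real.log (Q θ / ρ θ) := by
  classical
  have hne : Nonempty Θ := by
    by_contra h
    rw [not_nonempty_iff] at h
    simp [Finset.univ_eq_empty] at hρ1
  set Z : ℕ → ℝ := fun t => ∑ θ', Real.exp (-∑ s ∈ Finset.Ico 1 t, g s θ') * ρ θ'
    with hZdef
  have hZpos : ∀ t, 0 < Z t := fun t =>
    Finset.sum_pos (fun θ _ => mul_pos (Real.exp_pos _) (hρ θ)) Finset.univ_nonempty
  have hZ1 : Z 1 = 1 := by simp [hZdef, hρ1]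
  have hmix : ∀ t, 1 ≤ t → (∑ θ, P t θ * Real.exp (-g t θ)) = Z (t + 1) / Z t := by
    intro t ht
    simp only [hP, hZdef, div_mul_eq_mul_div]
    rw [← Finset.sum_div]
    congr 1
    refine Finset.sum_congr rfl fun θ _ => ?_
    rw [Finset.sum_Ico_succ_top ht, neg_add, Real.exp_add]
    ring
  have hsum : ∑ t ∈ Finset.Icc 1 T, Real.log (∑ θ, P t θ * Real.exp (-g t θ))
      = Real.log (Z (T + 1)) := by
    have h1 : ∀ t ∈ Finset.Icc 1 T, Real.log (∑ θ, P t θ * Real.exp (-g t θ))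
        = Real.log (Z (t + 1)) - Real.log (Z t) := by
      intro t ht
      rw [hmix t (Finset.mem_Icc.mp ht).1,
        Real.log_div (hZpos _).ne' (hZpos _).ne']
    rw [Finset.sum_congr rfl h1, ← Finset.Ico_add_one_right_eq_Icc, Finset.sum_Ico_eq_sum_range]
    have h2 := Finset.sum_range_sub (fun i => Real.log (Z (i + 1))) T
    calc ∑ i ∈ Finset.range T,
          (Real.log (Z (1 + i + 1)) - Real.log (Z (1 + i)))
        = ∑ i ∈ Finset.range T,
          (Real.log (Z (i + 1 + 1)) - Real.log (Z (i + 1))) := by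
          refine Finset.sum_congr rfl fun i _ => by rw [add_comm 1 i]
      _ = Real.log (Z (T + 1)) - Real.log (Z 1) := h2
      _ = Real.log (Z (T + 1)) := by rw [hZ1, Real.log_one, sub_zero]
  rw [hsum]
  set L : Θ → ℝ := fun θ => ∑ t ∈ Finset.Icc 1 T, g t θ with hLdef
  set Pf : Θ → ℝ := fun θ => Real.exp (-L θ) * ρ θ / Z (T + 1) with hPfdef
  have hPfpos : ∀ θ, 0 < Pf θ := fun θ =>
    div_pos (mul_pos (Real.exp_pos _) (hρ θ)) (hZpos _)
  have hPf1 : ∑ θ, Pf θ = 1 := by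
    rw [hPfdef]
    simp only
    rw [← Finset.sum_div, div_eq_one_iff_eq (hZpos (T + 1)).ne']
    rw [hZdef]
    refine Finset.sum_congr rfl fun θ _ => ?_
    rw [hLdef]
    simp [Finset.Ico_add_one_right_eq_Icc]
  have key : ∀ θ, Q θ * Real.log (Q θ / Pf θ)
      = Q θ * Real.log (Q θ / ρ θ) + Q θ * L θ + Q θ * Real.log (Z (T + 1)) := by
    intro θ
    rcases eq_or_lt_of_le (hQ θ) with h | h
    · simp [← h]
    · have hlog : Real.log (Q θ / Pf θ)
          = Real.log (Q θ / ρ θ) + L θ + Real.log (Z (T + 1)) := by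
        rw [Real.log_div h.ne' (hPfpos θ).ne', Real.log_div h.ne' (hρ θ).ne',
          hPfdef]
        simp only
        rw [Real.log_div (mul_pos (Real.exp_pos _) (hρ θ)).ne' (hZpos _).ne',
          Real.log_mul (Real.exp_pos _).ne' (hρ θ).ne', Real.log_exp]
        ring
      rw [hlog]; ring
  have hKLpos : 0 ≤ ∑ θ, Q θ * Real.log (Q θ / Pf θ) := by
    have hub : ∀ θ ∈ Finset.univ, Q θ - Pf θ ≤ Q θ * Real.log (Q θ / Pf θ) := by
      intro θ _
      rcases eq_or_lt_of_le (hQ θ) with h | h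
      · simp [← h, (hPfpos θ).le]
      · have hx : 0 < Pf θ / Q θ := div_pos (hPfpos θ) h
        have h1 := Real.log_le_sub_one_of_pos hx
        have h2 : Q θ * Real.log (Pf θ / Q θ) ≤ Pf θ - Q θ := by
          have := mul_le_mul_of_nonneg_left h1 h.le
          have heq : Q θ * (Pf θ / Q θ - 1) = Pf θ - Q θ := by
            field_simp
          linarith [this, heq.le]
        have h3 : Real.log (Q θ / Pf θ) = -Real.log (Pf θ / Q θ) := by
          rw [← Real.log_inv, inv_div]
        rw [h3]; nlinarith
    calc (0 : ℝ) = ∑ θ, (Q θ - Pf θ) := by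
          rw [Finset.sum_sub_distrib, hQ1, hPf1]; ring
      _ ≤ _ := Finset.sum_le_sum hub
  have hfin : ∑ θ, Q θ * Real.log (Q θ / Pf θ)
      = (∑ θ, Q θ * Real.log (Q θ / ρ θ)) + (∑ θ, Q θ * L θ)
        + Real.log (Z (T + 1)) := by
    simp_rw [key]
    rw [Finset.sum_add_distrib, Finset.sum_add_distrib, ← Finset.sum_mul, hQ1, one_mul]
  have hL : (∑ θ, Q θ * ∑ t ∈ Finset.Icc 1 T, g t θ) = ∑ θ, Q θ * L θ := rfl
  rw [hL]
  linarith [hKLpos, hfin]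
end

section
/- Let Γ ⊂ [0, 1/2] be a finite set of learning rates, K ≥ 1 the number of experts, and for t = 1, ..., T let P_t be any probability mass function on Γ × {1,...,K} with E_{P_t}[η] > 0. Let l_t ∈ [0,1]^K be loss vectors, define the weight vector w_t by w_t^k = E_{P_t}[η·1{expert = k}] / E_{P_t}[η], the instantaneous regret r_t^k = Σ_{j=1}^K w_t^j l_t^j − l_t^k, the surrogate loss f̂_t(η,k) = −η r_t^k + η² (r_t^k)², and set R_T^k = Σ_{t=1}^T r_t^k and V_T^k = Σ_{t=1}^T (r_t^k)². Then for every probability mass function Q on Γ × {1,...,K}: E_Q[η R_T^k] ≤ E_Q[η² V_T^k] + S_T^Q, where S_T^Q = −Σ_{t=1}^T ln E_{P_t}[e^{−f̂_t(η,k)}] − E_Q[Σ_{t=1}^T f̂_t(η,k)]. -/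
lemma key_exp (x : ℝ) (hx : |x| ≤ 1/2) : Real.exp (x - x^2) ≤ 1 + x := by
  have hx1 : -(1/2 : ℝ) ≤ x := neg_le_of_abs_le hx
  have hx2 : x ≤ 1/2 := le_of_abs_le hx
  set y := x - x^2 with hy
  have hyabs : |y| ≤ 1 := by
    rw [abs_le]; constructor <;> nlinarith [sq_nonneg x]
  have h := Real.exp_bound hyabs (n := 4) (by norm_num)
  have hsum : ∑ i ∈ Finset.range 4, y ^ i / (Nat.factorial i) = 1 + y + y^2/2 + y^3/6 := by
    norm_num [Finset.sum_range_succ, Nat.factorial]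
  rw [hsum] at h
  have hy4 : |y| ^ 4 = y ^ 4 := by
    rw [← abs_pow, abs_of_nonneg (by positivity)]
  rw [hy4] at h
  have h' : Real.exp y ≤ 1 + y + y^2/2 + y^3/6 + y^4 * (5/96) := by
    have := abs_le.mp h
    norm_num [Nat.factorial] at this
    nlinarith [this.2]
  have hpoly : 1 + y + y^2/2 + y^3/6 + y^4 * (5/96) ≤ 1 + x := by
    rw [hy]
    nlinarith [sq_nonneg x, sq_nonneg (x + 1/2), sq_nonneg (x - 1/2), sq_nonneg (x*(x+1/2)), sq_nonneg (x*(x-1/2)), mul_nonneg (mul_nonneg (sq_nonneg x) (by linarith : (0:ℝ) ≤ x + 1/2)) (by linarith : (0:ℝ) ≤ 1/2 - x)]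
  linarith

/-- Let `Γ ⊂ [0, 1/2]` be a finite set of learning rates and `K ≥ 1` the number of experts.
For any probability mass functions `P t` on `Γ × Fin K` with `E_{P t}[η] > 0`, losses
`l t k ∈ [0,1]`, weights `w t k = E_{P t}[η·1{expert = k}] / E_{P t}[η]`, instantaneous
regrets `r t k = Σ_j (w t j)(l t j) − l t k` and surrogate losses
`f̂ t (η, k) = −η r t k + η² (r t k)²`, every probability mass function `Q` on `Γ × Fin K`
satisfies `E_Q[η R_T^k] ≤ E_Q[η² V_T^k] + S_T^Q`, where `R_T^k = Σ_{t=1}^T r t k`,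
`V_T^k = Σ_{t=1}^T (r t k)²` and
`S_T^Q = −Σ_{t=1}^T ln E_{P t}[e^{−f̂ t}] − E_Q[Σ_{t=1}^T f̂ t]`. -/
theorem expected_regret_le_variance_add_surrogate_regret
    (Γ : Finset ℝ) (hΓ : ∀ η ∈ Γ, η ∈ Set.Icc (0 : ℝ) (1 / 2))
    (K T : ℕ) (hK : 1 ≤ K)
    (P : ℕ → ℝ → Fin K → ℝ)
    (hP0 : ∀ t η k, 0 ≤ P t η k)
    (hP1 : ∀ t, ∑ η ∈ Γ, ∑ k, P t η k = 1)
    (hPη : ∀ t, 0 < ∑ η ∈ Γ, ∑ k, P t η k * η)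
    (l : ℕ → Fin K → ℝ) (hl : ∀ t k, l t k ∈ Set.Icc (0 : ℝ) 1)
    (w : ℕ → Fin K → ℝ)
    (hw : ∀ t k, w t k = (∑ η ∈ Γ, P t η k * η) / ∑ η ∈ Γ, ∑ j, P t η j * η)
    (r : ℕ → Fin K → ℝ)
    (hr : ∀ t k, r t k = (∑ j, w t j * l t j) - l t k)
    (Q : ℝ → Fin K → ℝ) (hQ0 : ∀ η k, 0 ≤ Q η k) (hQ1 : ∑ η ∈ Γ, ∑ k, Q η k = 1) :
    ∑ η ∈ Γ, ∑ k, Q η k * (η * ∑ t ∈ Finset.Icc 1 T, r t k) ≤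
      (∑ η ∈ Γ, ∑ k, Q η k * (η ^ 2 * ∑ t ∈ Finset.Icc 1 T, (r t k) ^ 2)) +
        ((-∑ t ∈ Finset.Icc 1 T, Real.log (∑ η ∈ Γ, ∑ k,
            P t η k * Real.exp (-(-η * r t k + η ^ 2 * (r t k) ^ 2)))) -
          ∑ η ∈ Γ, ∑ k, Q η k * ∑ t ∈ Finset.Icc 1 T,
            (-η * r t k + η ^ 2 * (r t k) ^ 2)) := by
  classical
  have hZpos : ∀ t, 0 < ∑ η ∈ Γ, ∑ j, P t η j * η := hPη
  have hnum_nonneg : ∀ t (k : Fin K), 0 ≤ ∑ η ∈ Γ, P t η k * η := by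
    intro t k
    exact Finset.sum_nonneg fun η hη => mul_nonneg (hP0 t η k) (hΓ η hη).1
  have hw_nonneg : ∀ t k, 0 ≤ w t k := by
    intro t k
    rw [hw t k]
    exact div_nonneg (hnum_nonneg t k) (hZpos t).le
  have hw_sum : ∀ t, ∑ k, w t k = 1 := by
    intro t
    have h1 : ∑ k, w t k = (∑ k : Fin K, ∑ η ∈ Γ, P t η k * η) / (∑ η ∈ Γ, ∑ j, P t η j * η) := by
      rw [Finset.sum_div]
      exact Finset.sum_congr rfl fun k _ => hw t k
    rw [h1, Finset.sum_comm]
    exact div_self (hZpos t).ne'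
  have hnum : ∀ t (k : Fin K), ∑ η ∈ Γ, P t η k * η = w t k * ∑ η ∈ Γ, ∑ j, P t η j * η := by
    intro t k
    rw [hw t k, div_mul_cancel₀ _ (hZpos t).ne']
  have hS_mem : ∀ t, (∑ j, w t j * l t j) ∈ Set.Icc (0:ℝ) 1 := by
    intro t
    constructor
    · exact Finset.sum_nonneg fun j _ => mul_nonneg (hw_nonneg t j) (hl t j).1
    · calc ∑ j, w t j * l t j ≤ ∑ j, w t j * 1 :=
            Finset.sum_le_sum fun j _ => mul_le_mul_of_nonneg_left (hl t j).2 (hw_nonneg t j)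
        _ = 1 := by simp [hw_sum t]
  have hr_abs : ∀ t k, |r t k| ≤ 1 := by
    intro t k
    rw [hr t k, abs_le]
    have h1 := hS_mem t
    have h2 := hl t k
    exact ⟨by linarith [h1.1, h2.2], by linarith [h1.2, h2.1]⟩
  have hPr : ∀ t, ∑ η ∈ Γ, ∑ k, P t η k * (η * r t k) = 0 := by
    intro t
    rw [Finset.sum_comm]
    have hwr : ∑ k, w t k * r t k = 0 := by
      have h2 : ∑ k, w t k * r t k
          = (∑ k, w t k) * (∑ j, w t j * l t j) - ∑ k, w t k * l t k := by
        rw [Finset.sum_mul, ← Finset.sum_sub_distrib]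
        exact Finset.sum_congr rfl fun k _ => by rw [hr t k]; ring
      rw [h2, hw_sum t, one_mul, sub_self]
    calc ∑ k : Fin K, ∑ η ∈ Γ, P t η k * (η * r t k)
        = ∑ k : Fin K, w t k * (∑ η ∈ Γ, ∑ j, P t η j * η) * r t k := by
          refine Finset.sum_congr rfl fun k _ => ?_
          rw [← hnum t k, Finset.sum_mul]
          exact Finset.sum_congr rfl fun η _ => by ring
      _ = (∑ η ∈ Γ, ∑ j, P t η j * η) * ∑ k, w t k * r t k := by
          rw [Finset.mul_sum]
          exact Finset.sum_congr rfl fun k _ => by ring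
      _ = 0 := by rw [hwr, mul_zero]
  have hA : ∀ t, (∑ η ∈ Γ, ∑ k, P t η k * Real.exp (-(-η * r t k + η ^ 2 * (r t k) ^ 2))) ≤ 1 := by
    intro t
    have hb : ∀ η ∈ Γ, ∀ k : Fin K,
        P t η k * Real.exp (-(-η * r t k + η ^ 2 * (r t k) ^ 2)) ≤ P t η k * (1 + η * r t k) := by
      intro η hη k
      apply mul_le_mul_of_nonneg_left _ (hP0 t η k)
      have hxabs : |η * r t k| ≤ 1/2 := by
        rw [abs_mul, abs_of_nonneg (hΓ η hη).1]
        calc η * |r t k| ≤ (1/2) * 1 :=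
              mul_le_mul (hΓ η hη).2 (hr_abs t k) (abs_nonneg _) (by norm_num)
          _ = 1/2 := by norm_num
      calc Real.exp (-(-η * r t k + η ^ 2 * (r t k) ^ 2))
          = Real.exp ((η * r t k) - (η * r t k)^2) := by congr 1; ring
        _ ≤ 1 + η * r t k := key_exp (η * r t k) hxabs
    calc (∑ η ∈ Γ, ∑ k, P t η k * Real.exp (-(-η * r t k + η ^ 2 * (r t k) ^ 2)))
        ≤ ∑ η ∈ Γ, ∑ k, P t η k * (1 + η * r t k) :=
          Finset.sum_le_sum fun η hη => Finset.sum_le_sum fun k _ => hb η hη k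
      _ = ∑ η ∈ Γ, ∑ k, (P t η k + P t η k * (η * r t k)) :=
          Finset.sum_congr rfl fun η _ => Finset.sum_congr rfl fun k _ => by ring
      _ = (∑ η ∈ Γ, ∑ k, P t η k) + ∑ η ∈ Γ, ∑ k, P t η k * (η * r t k) := by
          rw [← Finset.sum_add_distrib]
          exact Finset.sum_congr rfl fun η _ => Finset.sum_add_distrib
      _ = 1 := by rw [hP1 t, hPr t, add_zero]
  have hApos : ∀ t, 0 < ∑ η ∈ Γ, ∑ k, P t η k * Real.exp (-(-η * r t k + η ^ 2 * (r t k) ^ 2)) := by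
    intro t
    obtain ⟨η₀, hη₀, k₀, hk₀⟩ : ∃ η ∈ Γ, ∃ k, 0 < P t η k := by
      by_contra hcon
      push_neg at hcon
      have h0 : ∑ η ∈ Γ, ∑ k, P t η k = 0 :=
        Finset.sum_eq_zero fun η hη => Finset.sum_eq_zero fun k _ =>
          le_antisymm (hcon η hη k) (hP0 t η k)
      rw [hP1 t] at h0; norm_num at h0
    refine Finset.sum_pos'
      (fun η _ => Finset.sum_nonneg fun k _ => mul_nonneg (hP0 t η k) (Real.exp_pos _).le)
      ⟨η₀, hη₀, Finset.sum_pos'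
        (fun k _ => mul_nonneg (hP0 t η₀ k) (Real.exp_pos _).le)
        ⟨k₀, Finset.mem_univ k₀, mul_pos hk₀ (Real.exp_pos _)⟩⟩
  have hN : 0 ≤ -∑ t ∈ Finset.Icc 1 T, Real.log (∑ η ∈ Γ, ∑ k,
      P t η k * Real.exp (-(-η * r t k + η ^ 2 * (r t k) ^ 2))) := by
    rw [neg_nonneg]
    exact Finset.sum_nonpos fun t _ => Real.log_nonpos (hApos t).le (hA t)
  have hL : ∑ η ∈ Γ, ∑ k, Q η k * (η * ∑ t ∈ Finset.Icc 1 T, r t k)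
      = (∑ η ∈ Γ, ∑ k, Q η k * (η ^ 2 * ∑ t ∈ Finset.Icc 1 T, (r t k) ^ 2))
        - ∑ η ∈ Γ, ∑ k, Q η k * ∑ t ∈ Finset.Icc 1 T, (-η * r t k + η ^ 2 * (r t k) ^ 2) := by
    rw [← Finset.sum_sub_distrib]
    refine Finset.sum_congr rfl fun η _ => ?_
    rw [← Finset.sum_sub_distrib]
    refine Finset.sum_congr rfl fun k _ => ?_
    have hsplit : ∑ t ∈ Finset.Icc 1 T, (-η * r t k + η ^ 2 * (r t k) ^ 2)
        = -η * ∑ t ∈ Finset.Icc 1 T, r t k + η ^ 2 * ∑ t ∈ Finset.Icc 1 T, (r t k) ^ 2 := by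
      rw [Finset.sum_add_distrib, Finset.mul_sum, Finset.mul_sum]
    rw [hsplit]; ring
  linarith [hN, hL]
end

section
/- Let Γ ⊂ [0, 1/2] be a finite set, K ≥ 1, let P be a probability mass function on Γ × {1,...,K} with E_P[η] > 0, let l ∈ [0,1]^K, and define w^k = E_P[η·1{expert = k}] / E_P[η] and r^k = Σ_{j=1}^K w^j l^j − l^k. Then E_P[e^{η r^k − η² (r^k)²}] ≤ 1; equivalently, the mix loss −ln E_P[e^{−f̂(η,k)}] of the surrogate loss f̂(η,k) = −η r^k + η² (r^k)² under P is nonnegative. -/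
lemma exp_sub_sq_le (x : ℝ) (h1 : -(1/2) ≤ x) (h2 : x ≤ 1/2) :
    Real.exp (x - x^2) ≤ 1 + x := by
  rcases le_or_gt 0 x with hx | hx
  · have h3 : (0:ℝ) < 1 - (x - x^2) := by nlinarith
    have h5 : 0 < Real.exp (x - x^2) := Real.exp_pos _
    have h4 : Real.exp (x - x^2) * (1 - (x - x^2)) ≤ 1 := by
      have h := Real.add_one_le_exp (-(x - x^2))
      rw [Real.exp_neg] at h
      calc Real.exp (x - x^2) * (1 - (x - x^2))
          ≤ Real.exp (x - x^2) * (Real.exp (x - x^2))⁻¹ := by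
            apply mul_le_mul_of_nonneg_left _ h5.le; linarith
        _ = 1 := mul_inv_cancel₀ h5.ne'
    nlinarith [h4, h5, h3]
  · have hs : 0 ≤ x^2 - x := by nlinarith
    have hq : 1 + (x^2 - x) + (x^2 - x)^2/2 ≤ Real.exp (x^2 - x) := by
      have := Real.sum_le_exp_of_nonneg hs 3
      simp [Finset.sum_range_succ] at this
      nlinarith [this]
    have he : Real.exp (x - x^2) * Real.exp (x^2 - x) = 1 := by
      rw [← Real.exp_add]; ring_nf; exact Real.exp_zero
    have h7 : (1 + (x^2 - x) + (x^2 - x)^2/2) * (1 + x) ≥ 1 := by nlinarith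
    have hx1 : (0:ℝ) < 1 + x := by linarith
    have : 1 ≤ (1 + x) * Real.exp (x^2 - x) := by nlinarith
    calc Real.exp (x - x^2) = 1 / Real.exp (x^2 - x) := by
          rw [eq_div_iff (Real.exp_pos _).ne']; exact he
      _ ≤ 1 + x := by rw [div_le_iff₀ (Real.exp_pos _)]; linarith [this]

/-- Let `Γ ⊂ [0, 1/2]` be a finite set of learning rates and `K ≥ 1` the number of experts.
Let `P` be a probability mass function on `Γ × Fin K` with `E_P[η] > 0`, let `l k ∈ [0,1]`
be the experts' losses, let `w k = E_P[η·1{expert = k}] / E_P[η]` and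
`r k = Σ_j (w j)(l j) − l k`. Then `E_P[e^{η r k − η² (r k)²}] ≤ 1`; equivalently, the mix
loss of the surrogate loss `f̂(η,k) = −η r k + η² (r k)²` under `P` is nonnegative. -/
theorem surrogate_mix_loss_nonneg
    (Γ : Finset ℝ) (hΓ : ∀ η ∈ Γ, η ∈ Set.Icc (0 : ℝ) (1 / 2))
    (K : ℕ) (hK : 1 ≤ K)
    (P : ℝ → Fin K → ℝ)
    (hP0 : ∀ η k, 0 ≤ P η k)
    (hP1 : ∑ η ∈ Γ, ∑ k, P η k = 1)
    (hPη : 0 < ∑ η ∈ Γ, ∑ k, P η k * η)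
    (l : Fin K → ℝ) (hl : ∀ k, l k ∈ Set.Icc (0 : ℝ) 1)
    (w : Fin K → ℝ)
    (hw : ∀ k, w k = (∑ η ∈ Γ, P η k * η) / ∑ η ∈ Γ, ∑ j, P η j * η)
    (r : Fin K → ℝ)
    (hr : ∀ k, r k = (∑ j, w j * l j) - l k) :
    ∑ η ∈ Γ, ∑ k, P η k * Real.exp (η * r k - η ^ 2 * (r k) ^ 2) ≤ 1 := by
  set D := ∑ η ∈ Γ, ∑ j, P η j * η with hD
  have hD0 : 0 < D := hPη
  -- w k * D = ∑_η P η k η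
  have hwD : ∀ k, w k * D = ∑ η ∈ Γ, P η k * η := by
    intro k; rw [hw k]; field_simp
  -- weights nonneg
  have hw0 : ∀ k, 0 ≤ w k := by
    intro k; rw [hw k]
    apply div_nonneg _ hD0.le
    exact Finset.sum_nonneg fun η hη => mul_nonneg (hP0 η k) (hΓ η hη).1
  -- sum of weights = 1
  have hwsum : ∑ k, w k = 1 := by
    have : (∑ k, w k) * D = D := by
      rw [Finset.sum_mul]
      simp_rw [hwD]
      rw [Finset.sum_comm]
    have h1 : (∑ k, w k) * D = 1 * D := by rw [one_mul]; exact this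
    exact mul_right_cancel₀ hD0.ne' h1
  -- bounds on S = ∑ w l
  set S := ∑ j, w j * l j with hS
  have hS0 : 0 ≤ S := Finset.sum_nonneg fun j _ => mul_nonneg (hw0 j) (hl j).1
  have hS1 : S ≤ 1 := by
    calc S ≤ ∑ j, w j := Finset.sum_le_sum fun j _ =>
            mul_le_of_le_one_right (hw0 j) (hl j).2
      _ = 1 := hwsum
  have hrb : ∀ k, -1 ≤ r k ∧ r k ≤ 1 := by
    intro k; rw [hr k]
    constructor
    · have := (hl k).2; linarith
    · have := (hl k).1; linarith
  -- ∑ w k r k = 0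
  have hwr : ∑ k, w k * r k = 0 := by
    have h2 : ∑ k, w k * r k = ∑ k, (S * w k - w k * l k) := by
      apply Finset.sum_congr rfl; intro k _; rw [hr k]; ring
    rw [h2, Finset.sum_sub_distrib, ← Finset.mul_sum, hwsum, ← hS]; ring
  -- pointwise bound then sum
  have step : ∑ η ∈ Γ, ∑ k, P η k * Real.exp (η * r k - η ^ 2 * (r k) ^ 2)
      ≤ ∑ η ∈ Γ, ∑ k, P η k * (1 + η * r k) := by
    apply Finset.sum_le_sum; intro η hη
    apply Finset.sum_le_sum; intro k _
    apply mul_le_mul_of_nonneg_left _ (hP0 η k)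
    have hx1 : -(1/2) ≤ η * r k := by
      have h1 := (hΓ η hη).1; have h2 := (hΓ η hη).2
      nlinarith [(hrb k).1, (hrb k).2]
    have hx2 : η * r k ≤ 1/2 := by
      have h1 := (hΓ η hη).1; have h2 := (hΓ η hη).2
      nlinarith [(hrb k).1, (hrb k).2]
    have := exp_sub_sq_le (η * r k) hx1 hx2
    calc Real.exp (η * r k - η ^ 2 * r k ^ 2)
        = Real.exp (η * r k - (η * r k)^2) := by ring_nf
      _ ≤ 1 + η * r k := this
  refine step.trans ?_
  have expand : ∑ η ∈ Γ, ∑ k, P η k * (1 + η * r k)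
      = (∑ η ∈ Γ, ∑ k, P η k) + ∑ η ∈ Γ, ∑ k, P η k * η * r k := by
    rw [← Finset.sum_add_distrib]
    congr 1; ext η
    rw [← Finset.sum_add_distrib]
    congr 1; ext k; ring
  rw [expand, hP1]
  have : ∑ η ∈ Γ, ∑ k, P η k * η * r k = ∑ k, (∑ η ∈ Γ, P η k * η) * r k := by
    rw [Finset.sum_comm]
    congr 1; ext k; rw [Finset.sum_mul]
  rw [this]
  simp_rw [← hwD]
  have : ∑ k, w k * D * r k = D * ∑ k, w k * r k := by
    rw [Finset.mul_sum]; congr 1; ext k; ring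
  rw [this, hwr]
  simp
end

section
/- For every real number x with x ≥ −1/2, the inequality e^{x − x²} ≤ 1 + x holds. -/
/-- For every real number `x ≥ −1/2`, the inequality `e^(x − x²) ≤ 1 + x` holds. -/
theorem exp_sub_sq_le_one_add (x : ℝ) (hx : -(1 / 2) ≤ x) :
    Real.exp (x - x ^ 2) ≤ 1 + x := by
  have hB : Real.exp (x - x ^ 2) * Real.exp (x ^ 2 - x) = 1 := by
    rw [← Real.exp_add]; ring_nf; exact Real.exp_zero
  have hA := Real.exp_pos (x - x ^ 2)
  rcases le_or_gt 0 x with h | h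
  · have h1 : (x ^ 2 - x) + 1 ≤ Real.exp (x ^ 2 - x) := Real.add_one_le_exp _
    nlinarith [mul_le_mul_of_nonneg_left h1 hA.le, sq_nonneg x, sq_nonneg (x - 1),
      mul_nonneg (mul_nonneg h h) h]
  · have hs : 0 ≤ x ^ 2 - x := by nlinarith
    have h1 := Real.quadratic_le_exp_of_nonneg hs
    nlinarith [mul_le_mul_of_nonneg_left h1 hA.le, sq_nonneg x, sq_nonneg (x + 1/2),
      mul_nonneg (sq_nonneg x) (by linarith : (0:ℝ) ≤ x + 1/2)]
end

section
/- Let R, V, A, T be real numbers with A ≥ 1, 0 ≤ V ≤ T, T ≥ 1, and suppose that R ≤ 2η̂ V + A/η̂ for every real η̂ with 1/(2√T) ≤ η̂ ≤ 1/2. Then R ≤ 2√(2VA) + 4A. -/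
/-- If `A ≥ 1`, `0 ≤ V ≤ T`, `T ≥ 1` and `R ≤ 2η̂V + A/η̂` for every learning rate
`η̂ ∈ [1/(2√T), 1/2]`, then `R ≤ 2√(2VA) + 4A`. -/
theorem regret_bound_of_family_of_bounds (R V A T : ℝ)
    (hA : 1 ≤ A) (hV0 : 0 ≤ V) (hVT : V ≤ T) (hT : 1 ≤ T)
    (h : ∀ η : ℝ, 1 / (2 * Real.sqrt T) ≤ η → η ≤ 1 / 2 → R ≤ 2 * η * V + A / η) :
    R ≤ 2 * Real.sqrt (2 * V * A) + 4 * A := by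
  have hT0 : (0:ℝ) ≤ T := le_trans zero_le_one hT
  have hu1 : 1 ≤ Real.sqrt T := by
    rw [show (1:ℝ) = Real.sqrt 1 by simp]
    exact Real.sqrt_le_sqrt hT
  have hu0 : 0 < Real.sqrt T := lt_of_lt_of_le one_pos hu1
  have hu2 : Real.sqrt T ^ 2 = T := Real.sq_sqrt hT0
  have hsqnn : 0 ≤ Real.sqrt (2 * V * A) := Real.sqrt_nonneg _
  by_cases hV : V ≤ 2 * A
  · -- use η = 1/2
    have h1 : 1 / (2 * Real.sqrt T) ≤ 1 / 2 := by
      apply div_le_div_of_nonneg_left (by norm_num) (by norm_num)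
      linarith
    have := h (1/2) h1 le_rfl
    have : R ≤ V + 2 * A := by
      rw [show A / (1/2 : ℝ) = 2 * A by ring] at this
      linarith
    nlinarith
  · push_neg at hV
    set s := Real.sqrt A with hs_def
    set t := Real.sqrt (2 * V) with ht_def
    have hs1 : 1 ≤ s := by
      rw [hs_def, show (1:ℝ) = Real.sqrt 1 by simp]
      exact Real.sqrt_le_sqrt hA
    have hs0 : 0 < s := lt_of_lt_of_le one_pos hs1
    have hV0' : 0 < V := by nlinarith
    have ht0 : 0 < t := Real.sqrt_pos.mpr (by linarith)
    have hs2 : s ^ 2 = A := Real.sq_sqrt (by linarith)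
    have ht2 : t ^ 2 = 2 * V := Real.sq_sqrt (by linarith)
    have hsqrt : Real.sqrt (2 * V * A) = t * s := by
      rw [ht_def, hs_def, ← Real.sqrt_mul (by linarith)]
    have hle : s / t ≤ 1 / 2 := by
      rw [div_le_div_iff₀ ht0 (by norm_num)]
      nlinarith
    have hge : 1 / (2 * Real.sqrt T) ≤ s / t := by
      rw [div_le_div_iff₀ (by positivity) ht0]
      nlinarith [hV0, hVT, mul_pos hu0 hs0]
    have key := h (s / t) hge hle
    have heq : 2 * (s / t) * V + A / (s / t) = 2 * (t * s) := by
      have hV2 : V = t ^ 2 / 2 := by linarith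
      rw [← hs2, hV2]
      field_simp
      ring
    rw [heq] at key
    rw [hsqrt]
    nlinarith
end

section
/- (Squint regret bound) Let T ≥ 1, K ≥ 1, let l_t ∈ [0,1]^K for t = 1,...,T be loss vectors, let π be a probability mass function on {1,...,K} with π(k) > 0 for all k, let Γ = {1/2} ∪ {2^{−i} : i = 1,...,⌈log₂ √T⌉} and let γ be the uniform distribution on Γ. Define recursively: w_1^k = π(k), and for t ≥ 1, r_t^k = Σ_j w_t^j l_t^j − l_t^k, R_t^k = Σ_{s=1}^t r_s^k, V_t^k = Σ_{s=1}^t (r_s^k)², and w_{t+1}^k = E_{γ(η)π(j)}[e^{η R_t^j − η² V_t^j} η · 1{j = k}] / E_{γ(η)π(j)}[e^{η R_t^j − η² V_t^j} η]. Then for every nonempty subset 𝒦 ⊆ {1,...,K}, with R_T^𝒦 = E_{π(k|𝒦)}[R_T^k], V_T^𝒦 = E_{π(k|𝒦)}[V_T^k] (where π(k|𝒦) = π(k)/π(𝒦) for k ∈ 𝒦) and A_T^𝒦 = max{ln⌈log₂ √T⌉ − ln π(𝒦), 1}, one has R_T^𝒦 ≤ 2√(2 V_T^𝒦 A_T^𝒦)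 + 4 A_T^𝒦. -/
/-- The grid of learning rates `Γ = {1/2} ∪ {2^(−i) : i = 1, …, ⌈log₂ √T⌉}` used by the
Squint algorithm with time horizon `T`. -/
noncomputable def sqGamma (T : ℕ) : Finset ℝ :=
  insert (1 / 2 : ℝ)
    ((Finset.Icc 1 ⌈Real.logb 2 (Real.sqrt T)⌉₊).image fun i : ℕ => (2 : ℝ) ^ (-(i : ℤ)))

lemma sqG_half_mem (T : ℕ) : (1 / 2 : ℝ) ∈ sqGamma T := Finset.mem_insert_self _ _

lemma sqG_pos {T : ℕ} {η : ℝ} (h : η ∈ sqGamma T) : 0 < η := by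
  rcases Finset.mem_insert.1 h with h | h
  · rw [h]; norm_num
  · obtain ⟨i, -, rfl⟩ := Finset.mem_image.1 h
    positivity

lemma sqG_le_half {T : ℕ} {η : ℝ} (h : η ∈ sqGamma T) : η ≤ 1 / 2 := by
  rcases Finset.mem_insert.1 h with h | h
  · rw [h]
  · obtain ⟨i, hi, rfl⟩ := Finset.mem_image.1 h
    have hi1 : 1 ≤ i := (Finset.mem_Icc.1 hi).1
    have : (2 : ℝ) ^ (-(i : ℤ)) ≤ (2 : ℝ) ^ (-1 : ℤ) := by
      apply zpow_le_zpow_right₀ one_le_two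
      omega
    simpa using this

lemma sqG_card_pos (T : ℕ) : 0 < (sqGamma T).card :=
  Finset.card_pos.2 ⟨_, sqG_half_mem T⟩

lemma sqG_card_le (T : ℕ) (hn : 1 ≤ ⌈Real.logb 2 (Real.sqrt T)⌉₊) :
    (sqGamma T).card ≤ ⌈Real.logb 2 (Real.sqrt T)⌉₊ := by
  have hmem : (1 / 2 : ℝ) ∈
      ((Finset.Icc 1 ⌈Real.logb 2 (Real.sqrt T)⌉₊).image fun i : ℕ => (2 : ℝ) ^ (-(i : ℤ))) := by
    refine Finset.mem_image.2 ⟨1, Finset.mem_Icc.2 ⟨le_refl _, hn⟩, ?_⟩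
    norm_num
  rw [sqGamma, Finset.insert_eq_self.2 hmem]
  calc _ ≤ (Finset.Icc 1 ⌈Real.logb 2 (Real.sqrt T)⌉₊).card := Finset.card_image_le
    _ = _ := by rw [Nat.card_Icc]; omega

lemma squint_exp_le {x : ℝ} (hx : -(1 / 2) ≤ x) : Real.exp (x - x ^ 2) ≤ 1 + x := by
  have h1 : (0 : ℝ) < 1 + x := by linarith
  have key : 1 ≤ (1 + x) * Real.exp (x ^ 2 - x) := by
    rcases le_or_gt 0 x with hx0 | hx0
    · have h2 : x ^ 2 - x + 1 ≤ Real.exp (x ^ 2 - x) := by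
        have := Real.add_one_le_exp (x ^ 2 - x); linarith
      nlinarith [mul_le_mul_of_nonneg_left h2 h1.le, pow_nonneg hx0 3]
    · have hy : (0 : ℝ) ≤ x ^ 2 - x := by nlinarith
      have h2 : 1 + (x ^ 2 - x) + (x ^ 2 - x) ^ 2 / 2 ≤ Real.exp (x ^ 2 - x) :=
        Real.quadratic_le_exp_of_nonneg hy
      nlinarith [mul_le_mul_of_nonneg_left h2 h1.le, sq_nonneg x,
        mul_nonneg (mul_nonneg (sq_nonneg x) (sq_nonneg x)) (neg_nonneg.2 hx0.le)]
  rw [show x - x ^ 2 = -(x ^ 2 - x) by ring, Real.exp_neg,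
    inv_le_comm₀ (Real.exp_pos _) h1, ← one_div, div_le_iff₀ h1]
  linarith [key]

set_option maxHeartbeats 2000000 in
/-- **Squint regret bound.** With losses `l t k ∈ [0,1]`, a full-support prior `π` on the
`K` experts, the uniform prior `γ` on `Γ = {1/2} ∪ {2^(−i) : i = 1, …, ⌈log₂ √T⌉}`, and
weights given recursively by `w 1 = π` and
`w (t+1) k = E_{γ π}[e^{η R_t^j − η² V_t^j} η 1{j = k}] / E_{γ π}[e^{η R_t^j − η² V_t^j} η]`
(where `r t k = w t · l t − l t k`, `R t k = Σ_{s≤t} r s k`, `V t k = Σ_{s≤t} (r s k)²`),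
every nonempty subset `𝒦` of experts satisfies
`R_T^𝒦 ≤ 2 √(2 V_T^𝒦 A_T^𝒦) + 4 A_T^𝒦`, where `R_T^𝒦 = E_{π(·|𝒦)}[R T k]`,
`V_T^𝒦 = E_{π(·|𝒦)}[V T k]` and `A_T^𝒦 = max (ln ⌈log₂ √T⌉ − ln π(𝒦)) 1`. -/
theorem squint_regret_bound
    (T K : ℕ) (hT : 1 ≤ T) (hK : 1 ≤ K)
    (l : ℕ → Fin K → ℝ) (hl : ∀ t k, l t k ∈ Set.Icc (0 : ℝ) 1)
    (π : Fin K → ℝ) (hπ : ∀ k, 0 < π k) (hπ1 : ∑ k, π k = 1)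
    (w r R V : ℕ → Fin K → ℝ)
    (hw1 : ∀ k, w 1 k = π k)
    (hr : ∀ t k, r t k = (∑ j, w t j * l t j) - l t k)
    (hR : ∀ t k, R t k = ∑ s ∈ Finset.Icc 1 t, r s k)
    (hV : ∀ t k, V t k = ∑ s ∈ Finset.Icc 1 t, (r s k) ^ 2)
    (hw : ∀ t, 1 ≤ t → ∀ k, w (t + 1) k =
      (∑ η ∈ sqGamma T, ((sqGamma T).card : ℝ)⁻¹ * π k *
          Real.exp (η * R t k - η ^ 2 * V t k) * η) /
      ∑ η ∈ sqGamma T, ∑ j, ((sqGamma T).card : ℝ)⁻¹ * π j *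
          Real.exp (η * R t j - η ^ 2 * V t j) * η)
    (𝒦 : Finset (Fin K)) (h𝒦 : 𝒦.Nonempty) :
    (∑ k ∈ 𝒦, π k * R T k) / (∑ k ∈ 𝒦, π k) ≤
      2 * Real.sqrt (2 * ((∑ k ∈ 𝒦, π k * V T k) / (∑ k ∈ 𝒦, π k)) *
        max (Real.log (⌈Real.logb 2 (Real.sqrt T)⌉₊ : ℝ) - Real.log (∑ k ∈ 𝒦, π k)) 1) +
      4 * max (Real.log (⌈Real.logb 2 (Real.sqrt T)⌉₊ : ℝ) - Real.log (∑ k ∈ 𝒦, π k)) 1 := by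
  classical
  set n := ⌈Real.logb 2 (Real.sqrt T)⌉₊ with hn
  set C : ℝ := ((sqGamma T).card : ℝ) with hCdef
  have hC0 : (0 : ℝ) < C := by
    rw [hCdef]; exact_mod_cast sqG_card_pos T
  have hΓne : (sqGamma T).Nonempty := ⟨_, sqG_half_mem T⟩
  have hKne : (Finset.univ : Finset (Fin K)).Nonempty := ⟨⟨0, hK⟩, Finset.mem_univ _⟩
  -- weights are a probability vector
  have hwpos : ∀ t, 1 ≤ t → (∀ k, 0 ≤ w t k) ∧ (∑ k, w t k = 1) := by
    intro t ht
    rcases eq_or_lt_of_le ht with h1 | h2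
    · refine ⟨fun k => by rw [← h1, hw1]; exact (hπ k).le, ?_⟩
      rw [← h1]
      rw [Finset.sum_congr rfl (fun k _ => hw1 k)]
      exact hπ1
    · obtain ⟨s, rfl⟩ : ∃ s, t = s + 1 := ⟨t - 1, by omega⟩
      have hs : 1 ≤ s := by omega
      have hD : 0 < ∑ η ∈ sqGamma T, ∑ j, C⁻¹ * π j *
          Real.exp (η * R s j - η ^ 2 * V s j) * η := by
        apply Finset.sum_pos _ hΓne
        intro η hη
        apply Finset.sum_pos _ hKne
        intro j _
        have h1 := sqG_pos hη
        have h2 := hπ j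
        positivity
      constructor
      · intro k
        rw [hw s hs k]
        apply div_nonneg _ hD.le
        apply Finset.sum_nonneg
        intro η hη
        have h1 := (sqG_pos hη).le
        have h2 := (hπ k).le
        positivity
      · rw [Finset.sum_congr rfl (fun k _ => hw s hs k), ← Finset.sum_div,
          Finset.sum_comm, div_self hD.ne']
  -- r is in [-1, 1]
  have hrb : ∀ t, 1 ≤ t → ∀ k, -1 ≤ r t k ∧ r t k ≤ 1 := by
    intro t ht k
    obtain ⟨hw0, hws⟩ := hwpos t ht
    have h0 : 0 ≤ ∑ j, w t j * l t j :=
      Finset.sum_nonneg fun j _ => mul_nonneg (hw0 j) (hl t j).1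
    have h1 : ∑ j, w t j * l t j ≤ 1 := by
      calc ∑ j, w t j * l t j ≤ ∑ j, w t j := by
            apply Finset.sum_le_sum
            intro j _
            nlinarith [(hl t j).2, (hl t j).1, hw0 j]
        _ = 1 := hws
    rw [hr]
    exact ⟨by nlinarith [(hl t k).2], by nlinarith [(hl t k).1]⟩
  -- weighted instantaneous regret is zero
  have hrzero : ∀ t, 1 ≤ t → ∑ k, w t k * r t k = 0 := by
    intro t ht
    obtain ⟨-, hws⟩ := hwpos t ht
    have : ∀ k : Fin K, w t k * r t k
        = w t k * (∑ j, w t j * l t j) - w t k * l t k := by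
      intro k; rw [hr]; ring
    rw [Finset.sum_congr rfl (fun k _ => this k), Finset.sum_sub_distrib,
      ← Finset.sum_mul, hws, one_mul, sub_self]
  -- the potential is at most 1
  have hΦle : ∀ t : ℕ,
      ∑ η ∈ sqGamma T, ∑ k, C⁻¹ * π k * Real.exp (η * R t k - η ^ 2 * V t k) ≤ 1 := by
    intro t
    induction t with
    | zero =>
      have h0 : ∀ k : Fin K, R 0 k = 0 := fun k => by rw [hR]; simp
      have h0' : ∀ k : Fin K, V 0 k = 0 := fun k => by rw [hV]; simp
      have hinner : ∀ η : ℝ, ∑ k, C⁻¹ * π k * Real.exp (η * R 0 k - η ^ 2 * V 0 k) = C⁻¹ := by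
        intro η
        simp only [h0, h0', mul_zero, sub_zero, Real.exp_zero, mul_one]
        rw [← Finset.mul_sum, hπ1, mul_one]
      rw [Finset.sum_congr rfl (fun η _ => hinner η), Finset.sum_const, nsmul_eq_mul]
      rw [hCdef, mul_inv_cancel₀ (by exact_mod_cast (sqG_card_pos T).ne')]
    | succ s ih =>
      refine le_trans ?_ ih
      have hRs : ∀ k, R (s + 1) k = R s k + r (s + 1) k := by
        intro k
        rw [hR, hR, Finset.sum_Icc_succ_top (by omega : 1 ≤ s + 1)]
      have hVs : ∀ k, V (s + 1) k = V s k + (r (s + 1) k) ^ 2 := by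
        intro k
        rw [hV, hV, Finset.sum_Icc_succ_top (by omega : 1 ≤ s + 1)]
      have hterm : ∀ η ∈ sqGamma T, ∀ k : Fin K,
          C⁻¹ * π k * Real.exp (η * R (s + 1) k - η ^ 2 * V (s + 1) k)
          ≤ C⁻¹ * π k * Real.exp (η * R s k - η ^ 2 * V s k)
            + C⁻¹ * π k * Real.exp (η * R s k - η ^ 2 * V s k) * η * r (s + 1) k := by
        intro η hη k
        have hx : -(1 / 2) ≤ η * r (s + 1) k := by
          have h1 := sqG_pos hη
          have h2 := sqG_le_half hη
          have h3 := (hrb (s + 1) (by omega) k).1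
          nlinarith
        have hexp := squint_exp_le hx
        have hsplit : η * R (s + 1) k - η ^ 2 * V (s + 1) k
            = (η * R s k - η ^ 2 * V s k)
              + (η * r (s + 1) k - (η * r (s + 1) k) ^ 2) := by
          rw [hRs, hVs]; ring
        rw [hsplit, Real.exp_add]
        have hc : 0 ≤ C⁻¹ * π k * Real.exp (η * R s k - η ^ 2 * V s k) := by
          have := (hπ k).le
          positivity
        calc C⁻¹ * π k * (Real.exp (η * R s k - η ^ 2 * V s k)
              * Real.exp (η * r (s + 1) k - (η * r (s + 1) k) ^ 2))
            = (C⁻¹ * π k * Real.exp (η * R s k - η ^ 2 * V s k))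
              * Real.exp (η * r (s + 1) k - (η * r (s + 1) k) ^ 2) := by ring
          _ ≤ (C⁻¹ * π k * Real.exp (η * R s k - η ^ 2 * V s k))
              * (1 + η * r (s + 1) k) := mul_le_mul_of_nonneg_left hexp hc
          _ = C⁻¹ * π k * Real.exp (η * R s k - η ^ 2 * V s k)
              + C⁻¹ * π k * Real.exp (η * R s k - η ^ 2 * V s k) * η * r (s + 1) k := by
            ring
      have hE : ∑ η ∈ sqGamma T, ∑ k,
          C⁻¹ * π k * Real.exp (η * R s k - η ^ 2 * V s k) * η * r (s + 1) k = 0 := by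
        rw [Finset.sum_comm]
        have hinner : ∀ k : Fin K,
            ∑ η ∈ sqGamma T, C⁻¹ * π k * Real.exp (η * R s k - η ^ 2 * V s k) * η * r (s + 1) k
            = (∑ η ∈ sqGamma T, C⁻¹ * π k * Real.exp (η * R s k - η ^ 2 * V s k) * η)
              * r (s + 1) k := fun k => (Finset.sum_mul _ _ _).symm
        rw [Finset.sum_congr rfl (fun k _ => hinner k)]
        rcases Nat.eq_zero_or_pos s with hs0 | hs1
        · subst hs0
          have h0 : ∀ k : Fin K, R 0 k = 0 := fun k => by rw [hR]; simp
          have h0' : ∀ k : Fin K, V 0 k = 0 := fun k => by rw [hV]; simp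
          have hnum : ∀ k : Fin K,
              ∑ η ∈ sqGamma T, C⁻¹ * π k * Real.exp (η * R 0 k - η ^ 2 * V 0 k) * η
              = (∑ η ∈ sqGamma T, C⁻¹ * η) * w 1 k := by
            intro k
            simp only [h0, h0', mul_zero, sub_zero, Real.exp_zero, mul_one]
            rw [Finset.sum_mul, hw1]
            exact Finset.sum_congr rfl fun η _ => by ring
          rw [Finset.sum_congr rfl (fun k _ => by rw [hnum k])]
          have : ∀ k : Fin K, (∑ η ∈ sqGamma T, C⁻¹ * η) * w 1 k * r 1 k
              = (∑ η ∈ sqGamma T, C⁻¹ * η) * (w 1 k * r 1 k) := fun k => by ring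
          rw [Finset.sum_congr rfl (fun k _ => this k), ← Finset.mul_sum,
            hrzero 1 le_rfl, mul_zero]
        · have hD : 0 < ∑ η ∈ sqGamma T, ∑ j, C⁻¹ * π j *
              Real.exp (η * R s j - η ^ 2 * V s j) * η := by
            apply Finset.sum_pos _ hΓne
            intro η hη
            apply Finset.sum_pos _ hKne
            intro j _
            have h1 := sqG_pos hη
            have h2 := hπ j
            positivity
          have hnum : ∀ k : Fin K,
              ∑ η ∈ sqGamma T, C⁻¹ * π k * Real.exp (η * R s k - η ^ 2 * V s k) * η
              = w (s + 1) k * (∑ η ∈ sqGamma T, ∑ j, C⁻¹ * π j *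
                  Real.exp (η * R s j - η ^ 2 * V s j) * η) := by
            intro k
            rw [hw s hs1 k, div_mul_cancel₀ _ hD.ne']
          rw [Finset.sum_congr rfl (fun k _ => by rw [hnum k])]
          have : ∀ k : Fin K, w (s + 1) k * (∑ η ∈ sqGamma T, ∑ j, C⁻¹ * π j *
                  Real.exp (η * R s j - η ^ 2 * V s j) * η) * r (s + 1) k
              = (∑ η ∈ sqGamma T, ∑ j, C⁻¹ * π j *
                  Real.exp (η * R s j - η ^ 2 * V s j) * η) * (w (s + 1) k * r (s + 1) k) :=
            fun k => by ring
          rw [Finset.sum_congr rfl (fun k _ => this k), ← Finset.mul_sum,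
            hrzero (s + 1) (by omega), mul_zero]
      calc ∑ η ∈ sqGamma T, ∑ k, C⁻¹ * π k * Real.exp (η * R (s + 1) k - η ^ 2 * V (s + 1) k)
          ≤ ∑ η ∈ sqGamma T, ∑ k, (C⁻¹ * π k * Real.exp (η * R s k - η ^ 2 * V s k)
            + C⁻¹ * π k * Real.exp (η * R s k - η ^ 2 * V s k) * η * r (s + 1) k) :=
            Finset.sum_le_sum fun η hη => Finset.sum_le_sum fun k _ => hterm η hη k
        _ = (∑ η ∈ sqGamma T, ∑ k, C⁻¹ * π k * Real.exp (η * R s k - η ^ 2 * V s k))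
            + ∑ η ∈ sqGamma T, ∑ k,
              C⁻¹ * π k * Real.exp (η * R s k - η ^ 2 * V s k) * η * r (s + 1) k := by
            rw [← Finset.sum_add_distrib]
            exact Finset.sum_congr rfl fun η _ => Finset.sum_add_distrib
        _ = ∑ η ∈ sqGamma T, ∑ k, C⁻¹ * π k * Real.exp (η * R s k - η ^ 2 * V s k) := by
            rw [hE, add_zero]
  -- per-eta bound on the subset
  set p := ∑ k ∈ 𝒦, π k with hpdef
  have hp0 : 0 < p := Finset.sum_pos (fun k _ => hπ k) h𝒦
  have hp1 : p ≤ 1 := by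
    rw [hpdef, ← hπ1]
    exact Finset.sum_le_sum_of_subset_of_nonneg (Finset.subset_univ _)
      (fun k _ _ => (hπ k).le)
  have hηbound : ∀ η ∈ sqGamma T,
      ∑ k ∈ 𝒦, π k * Real.exp (η * R T k - η ^ 2 * V T k) ≤ C := by
    intro η hη
    have h1 : ∑ k ∈ 𝒦, C⁻¹ * π k * Real.exp (η * R T k - η ^ 2 * V T k)
        ≤ ∑ k, C⁻¹ * π k * Real.exp (η * R T k - η ^ 2 * V T k) :=
      Finset.sum_le_sum_of_subset_of_nonneg (Finset.subset_univ _)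
        (fun k _ _ => by have := (hπ k).le; positivity)
    have h2 : ∑ k, C⁻¹ * π k * Real.exp (η * R T k - η ^ 2 * V T k) ≤ 1 := by
      refine le_trans (Finset.single_le_sum
        (f := fun η => ∑ k, C⁻¹ * π k * Real.exp (η * R T k - η ^ 2 * V T k)) ?_ hη)
        (hΦle T)
      intro η' _
      apply Finset.sum_nonneg
      intro k _
      have := (hπ k).le
      positivity
    have h3 : C⁻¹ * ∑ k ∈ 𝒦, π k * Real.exp (η * R T k - η ^ 2 * V T k) ≤ 1 := by
      rw [Finset.mul_sum]
      simp only [← mul_assoc]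
      exact le_trans h1 h2
    have h4 := mul_le_mul_of_nonneg_left h3 hC0.le
    rw [← mul_assoc, mul_inv_cancel₀ hC0.ne', one_mul, mul_one] at h4
    exact h4
  -- Jensen
  set RK := (∑ k ∈ 𝒦, π k * R T k) / p with hRKdef
  set VK := (∑ k ∈ 𝒦, π k * V T k) / p with hVKdef
  set A := max (Real.log (n : ℝ) - Real.log p) 1 with hAdef
  have hA1 : (1 : ℝ) ≤ A := le_max_right _ _
  have hApos : (0 : ℝ) < A := lt_of_lt_of_le one_pos hA1
  have hlogC : Real.log C ≤ Real.log (n : ℝ) := by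
    rcases Nat.eq_zero_or_pos n with h0 | h1
    · have hΓeq : sqGamma T = {(1 / 2 : ℝ)} := by
        rw [sqGamma, ← hn, h0]
        simp
      rw [hCdef, hΓeq, h0]
      simp
    · have hle : C ≤ (n : ℝ) := by
        rw [hCdef, hn]
        exact_mod_cast sqG_card_le T (by rw [← hn]; exact h1)
      exact Real.log_le_log hC0 hle
  have hkey : ∀ η ∈ sqGamma T, η * RK - η ^ 2 * VK ≤ A := by
    intro η hη
    have hq0 : ∀ k ∈ 𝒦, 0 ≤ π k / p := fun k _ => div_nonneg (hπ k).le hp0.le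
    have hq1 : ∑ k ∈ 𝒦, π k / p = 1 := by
      rw [← Finset.sum_div, ← hpdef, div_self hp0.ne']
    have hjen := convexOn_exp.map_sum_le (t := 𝒦) (w := fun k => π k / p)
      (p := fun k => η * R T k - η ^ 2 * V T k) hq0 hq1 (fun k _ => Set.mem_univ _)
    simp only [smul_eq_mul] at hjen
    have hlhs : ∑ k ∈ 𝒦, (π k / p) * (η * R T k - η ^ 2 * V T k)
        = η * RK - η ^ 2 * VK := by
      rw [hRKdef, hVKdef]
      rw [Finset.sum_congr rfl (fun k _ => show (π k / p) * (η * R T k - η ^ 2 * V T k)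
        = (η * (π k * R T k) - η ^ 2 * (π k * V T k)) / p from by field_simp)]
      rw [← Finset.sum_div, Finset.sum_sub_distrib, ← Finset.mul_sum, ← Finset.mul_sum]
      field_simp
    have hrhs : ∑ k ∈ 𝒦, (π k / p) * Real.exp (η * R T k - η ^ 2 * V T k) ≤ C / p := by
      have : ∑ k ∈ 𝒦, (π k / p) * Real.exp (η * R T k - η ^ 2 * V T k)
          = (∑ k ∈ 𝒦, π k * Real.exp (η * R T k - η ^ 2 * V T k)) / p := by
        rw [Finset.sum_congr rfl (fun k _ => div_mul_eq_mul_div (π k) p _),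
          ← Finset.sum_div]
      rw [this]
      exact div_le_div_of_nonneg_right (hηbound η hη) hp0.le
    rw [hlhs] at hjen
    have h5 : Real.exp (η * RK - η ^ 2 * VK) ≤ C / p := le_trans hjen hrhs
    have h6 : η * RK - η ^ 2 * VK ≤ Real.log (C / p) := by
      have := Real.log_le_log (Real.exp_pos _) h5
      rwa [Real.log_exp] at this
    have h7 : Real.log (C / p) = Real.log C - Real.log p :=
      Real.log_div hC0.ne' hp0.ne'
    have h8 : η * RK - η ^ 2 * VK ≤ Real.log (n : ℝ) - Real.log p := by
      rw [h7] at h6; linarith [hlogC]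
    exact le_trans h8 (le_max_left _ _)
  have hkey2 : ∀ η ∈ sqGamma T, RK ≤ η * VK + A / η := by
    intro η hη
    have hη0 := sqG_pos hη
    have h2 : η * RK ≤ η ^ 2 * VK + A := by linarith [hkey η hη]
    calc RK = (η * RK) / η := by field_simp
      _ ≤ (η ^ 2 * VK + A) / η := by gcongr
      _ = η * VK + A / η := by field_simp
  clear_value n C p RK VK A
  -- bounds on VK
  have hVb : ∀ k : Fin K, 0 ≤ V T k ∧ V T k ≤ (T : ℝ) := by
    intro k
    rw [hV]
    constructor
    · positivity
    · have hle : ∑ s ∈ Finset.Icc 1 T, r s k ^ 2 ≤ ∑ s ∈ Finset.Icc 1 T, (1 : ℝ) := by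
        apply Finset.sum_le_sum
        intro s hs
        have h := hrb s (Finset.mem_Icc.1 hs).1 k
        nlinarith [h.1, h.2]
      have h2 : ∑ s ∈ Finset.Icc 1 T, (1 : ℝ) = (T : ℝ) := by simp
      linarith
  have hVK0 : 0 ≤ VK := by
    rw [hVKdef]
    exact div_nonneg (Finset.sum_nonneg fun k _ => mul_nonneg (hπ k).le (hVb k).1) hp0.le
  have hVKT : VK ≤ (T : ℝ) := by
    rw [hVKdef, div_le_iff₀ hp0]
    calc ∑ k ∈ 𝒦, π k * V T k ≤ ∑ k ∈ 𝒦, π k * (T : ℝ) :=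
        Finset.sum_le_sum fun k _ => mul_le_mul_of_nonneg_left (hVb k).2 (hπ k).le
      _ = (T : ℝ) * p := by rw [← Finset.sum_mul, ← hpdef]; ring
  show RK ≤ 2 * Real.sqrt (2 * VK * A) + 4 * A
  have hsq := Real.sqrt_nonneg (2 * VK * A)
  rcases lt_or_ge VK (2 * A) with hcase | hcase
  · have h := hkey2 (1 / 2) (sqG_half_mem T)
    have h2 : A / (1 / 2 : ℝ) = 2 * A := by
      rw [div_div_eq_mul_div, div_one]; ring
    rw [h2] at h
    linarith
  · have hVpos : 0 < VK := by linarith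
    set x := Real.sqrt (2 * A / VK) with hxdef
    have hx0 : 0 < x := Real.sqrt_pos.2 (by positivity)
    have hx2 : x ^ 2 = 2 * A / VK := Real.sq_sqrt (by positivity)
    have hx1 : x ≤ 1 := by
      rw [hxdef, show (1 : ℝ) = Real.sqrt 1 by rw [Real.sqrt_one]]
      apply Real.sqrt_le_sqrt
      rw [div_le_one hVpos]
      linarith
    clear_value x
    have hT0 : (0 : ℝ) < (T : ℝ) := by exact_mod_cast Nat.pos_of_ne_zero (by omega)
    have hsT : (0 : ℝ) < Real.sqrt T := Real.sqrt_pos.2 hT0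
    have hpow : Real.sqrt T ≤ (2 : ℝ) ^ (n : ℕ) := by
      have h1 : Real.logb 2 (Real.sqrt T) ≤ (n : ℝ) := by
        rw [hn]; exact Nat.le_ceil _
      calc Real.sqrt T = (2 : ℝ) ^ (Real.logb 2 (Real.sqrt T)) :=
            (Real.rpow_logb (by norm_num) (by norm_num) hsT).symm
        _ ≤ (2 : ℝ) ^ ((n : ℕ) : ℝ) :=
            (Real.rpow_le_rpow_left_iff (by norm_num : (1 : ℝ) < 2)).2 h1
        _ = (2 : ℝ) ^ (n : ℕ) := by rw [Real.rpow_natCast]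
    have hxlb : (2 : ℝ) ^ (-(n : ℤ)) ≤ x := by
      have h1 : (2 : ℝ) ^ (-(n : ℤ)) = ((2 : ℝ) ^ (n : ℕ))⁻¹ := by
        rw [zpow_neg, zpow_natCast]
      have h2 : ((2 : ℝ) ^ (n : ℕ))⁻¹ ≤ (Real.sqrt T)⁻¹ := inv_anti₀ hsT hpow
      have h3 : (Real.sqrt T)⁻¹ ≤ x := by
        rw [← Real.sqrt_inv, hxdef]
        apply Real.sqrt_le_sqrt
        rw [inv_eq_one_div, div_le_div_iff₀ hT0 hVpos, one_mul]
        have h4 : (1 : ℝ) ≤ 2 * A := by linarith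
        calc VK ≤ (T : ℝ) := hVKT
          _ = 1 * (T : ℝ) := (one_mul _).symm
          _ ≤ (2 * A) * (T : ℝ) := mul_le_mul_of_nonneg_right h4 hT0.le
          _ = 2 * A * (T : ℝ) := by ring
      linarith
    have hgrid : ∃ η ∈ sqGamma T, x / 2 ≤ η ∧ η ≤ x := by
      rcases le_or_gt (1 / 2 : ℝ) x with hhalf | hhalf
      · exact ⟨1 / 2, sqG_half_mem T, by linarith, hhalf⟩
      · have hxinv2 : (2 : ℝ) < x⁻¹ := by
          rw [lt_inv_comm₀ (by norm_num) hx0]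
          linarith
        have hL1 : 1 < Real.logb 2 x⁻¹ := by
          rw [Real.lt_logb_iff_rpow_lt (by norm_num) (by positivity), Real.rpow_one]
          exact hxinv2
        have hL0 : 0 ≤ Real.logb 2 x⁻¹ := by linarith
        set i := ⌈Real.logb 2 x⁻¹⌉₊ with hidef
        have hi1 : 1 < i := by
          rw [hidef]
          exact Nat.lt_ceil.2 (by exact_mod_cast hL1)
        have hile : Real.logb 2 x⁻¹ ≤ (i : ℝ) := Nat.le_ceil _
        have hilt : (i : ℝ) < Real.logb 2 x⁻¹ + 1 := by
          rw [hidef]; exact_mod_cast Nat.ceil_lt_add_one hL0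
        have hin : i ≤ n := by
          rw [hidef]
          apply Nat.ceil_le.2
          rw [Real.logb_le_iff_le_rpow (by norm_num) (by positivity)]
          rw [inv_le_comm₀ hx0 (by positivity)]
          calc ((2 : ℝ) ^ ((n : ℕ) : ℝ))⁻¹ = (2 : ℝ) ^ (-(n : ℤ)) := by
                rw [zpow_neg, zpow_natCast, Real.rpow_natCast]
            _ ≤ x := hxlb
        have hzr : (2 : ℝ) ^ (-(i : ℤ)) = (2 : ℝ) ^ (-(i : ℝ)) := by
          rw [show (-(i : ℝ)) = ((-(i : ℤ) : ℤ) : ℝ) by push_cast; ring, Real.rpow_intCast]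
        have hx_eq : (2 : ℝ) ^ (-Real.logb 2 x⁻¹) = x := by
          rw [Real.logb_inv, neg_neg, Real.rpow_logb (by norm_num) (by norm_num) hx0]
        have hmem : (2 : ℝ) ^ (-(i : ℤ)) ∈ sqGamma T := by
          apply Finset.mem_insert_of_mem
          refine Finset.mem_image.2 ⟨i, Finset.mem_Icc.2 ⟨by omega, ?_⟩, rfl⟩
          rw [← hn]; exact hin
        refine ⟨(2 : ℝ) ^ (-(i : ℤ)), hmem, ?_, ?_⟩
        · have h5 : (2 : ℝ) ^ (-Real.logb 2 x⁻¹ - 1) ≤ (2 : ℝ) ^ (-(i : ℝ)) :=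
            (Real.rpow_le_rpow_left_iff (by norm_num : (1 : ℝ) < 2)).2 (by linarith)
          have h6 : (2 : ℝ) ^ (-Real.logb 2 x⁻¹ - 1) = x / 2 := by
            rw [Real.rpow_sub (by norm_num), hx_eq, Real.rpow_one]
          rw [hzr]
          linarith
        · have h5 : (2 : ℝ) ^ (-(i : ℝ)) ≤ (2 : ℝ) ^ (-Real.logb 2 x⁻¹) :=
            (Real.rpow_le_rpow_left_iff (by norm_num : (1 : ℝ) < 2)).2 (by linarith)
          rw [hzr, ← hx_eq]
          exact h5
    obtain ⟨η, hηΓ, hη1, hη2⟩ := hgrid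
    have hη0 := sqG_pos hηΓ
    have hkx := hkey2 η hηΓ
    have h1 : η * VK ≤ x * VK := mul_le_mul_of_nonneg_right hη2 hVK0
    have h2 : A / η ≤ A / (x / 2) :=
      div_le_div_of_nonneg_left hApos.le (by linarith) hη1
    have h3 : A / (x / 2) = 2 * A / x := by
      rw [div_div_eq_mul_div]; ring
    have hxVK : (x * VK) ^ 2 = 2 * VK * A := by
      rw [mul_pow, hx2]
      field_simp
    have hAx : (2 * A / x) ^ 2 = 2 * VK * A := by
      rw [div_pow, hx2]
      field_simp
    have hxVK0 : 0 ≤ x * VK := mul_nonneg hx0.le hVK0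
    have hAx0 : 0 ≤ 2 * A / x := div_nonneg (by linarith) hx0.le
    have e1 : x * VK = Real.sqrt (2 * VK * A) := by
      rw [← hxVK, Real.sqrt_sq hxVK0]
    have e2 : 2 * A / x = Real.sqrt (2 * VK * A) := by
      rw [← hAx, Real.sqrt_sq hAx0]
    linarith
end
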